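/- Let R be a unital von Neumann regular ring. Then the map e ↦ eR is an order isomorphism from the Boolean algebra of central idempotents of R onto the center of the lattice L(R) of principal right ideals of R. -/

import Mathlib

section
variable {R : Type*} [Ring R]

/-- The principal right ideal `xR` of a ring `R`, as a set. -/
def rIdeal (x : R) : Set R := {y | ∃ r, y = x * r}

/-- A subset of `R` is a principal right ideal iff it is of the form `xR`. -/
def IsPrincRight (I : Set R) : Prop := ∃ x : R, I = rIdeal x

/-- The join (submodule sum) of two right ideals, as a set. -/
def idealSum (I J : Set R) : Set R := {z | ∃ a ∈ I, ∃ b ∈ J, z = a + b}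

/-- Subperspectivity in the lattice `L(R)` of principal right ideals:
`X ≲ U` iff there is a principal right ideal `Z` with `X ∩ Z = 0` and
`X ⊔ Z ⊆ U ⊔ Z`. -/
def SubperspIdeal (X U : Set R) : Prop :=
  ∃ Z : Set R, IsPrincRight Z ∧ X ∩ Z = {0} ∧ idealSum X Z ⊆ idealSum U Z

/-- An element of the lattice `L(R)` is central (= complemented and neutral)
iff it has a complement and every `X ∈ L(R)` with `X ≲ U` and `X ∩ U = 0` is
zero. -/
def IsCentralIdeal (U : Set R) : Prop :=
  (∃ V : Set R, IsPrincRight V ∧ idealSum U V = Set.univ ∧ U ∩ V = {0}) ∧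
  (∀ X : Set R, IsPrincRight X → SubperspIdeal X U → X ∩ U = {0} → X = {0})

end

/-!
If `e` is a central idempotent, `(1 - e)R` complements `eR`, and any `xR` subperspective to `eR`
lies in `eR`: for `y ∈ xR`, `y - ey` lies both in `xR` and in the perspector, which meet
trivially.

Conversely, by regularity every principal right ideal is `uR` for an idempotent `u = xy`. If `uR`
is central and `ub = b`, `uc = 0`, then `cbR` meets `uR` trivially and is perspective to a
part of it (via `(cb - b)R`), hence `cb = 0`. Taking `(b, c) = (u, (1 - u)r)` gives `ru = uru`;
taking `b = ur(1 - u)` and `c = (1 - u)y` with `byb = b` gives `b = b(cb) = 0`, i.e. `ur = uru`.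
So `u` is central.
-/

section
variable {R : Type*} [Ring R]

theorem self_mem_rIdeal (x : R) : x ∈ rIdeal x := ⟨1, (mul_one x).symm⟩

theorem zero_mem_rIdeal (x : R) : (0 : R) ∈ rIdeal x := ⟨0, (mul_zero x).symm⟩

theorem mul_mem_rIdeal {x y : R} (hy : y ∈ rIdeal x) (r : R) : y * r ∈ rIdeal x := by
  obtain ⟨s, rfl⟩ := hy
  exact ⟨s * r, mul_assoc _ _ _⟩

theorem rIdeal_subset_rIdeal_iff {x y : R} : rIdeal x ⊆ rIdeal y ↔ x ∈ rIdeal y :=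
  ⟨fun h => h (self_mem_rIdeal x), fun h _ ⟨r, hr⟩ => hr ▸ mul_mem_rIdeal h r⟩

theorem IsIdempotentElem.mem_rIdeal_iff {e y : R} (he : IsIdempotentElem e) :
    y ∈ rIdeal e ↔ e * y = y := by
  refine ⟨?_, fun h => ⟨y, h.symm⟩⟩
  rintro ⟨r, rfl⟩
  rw [← mul_assoc, he.eq]

theorem IsIdempotentElem.rIdeal_subset_rIdeal_iff {e f : R} (hf : IsIdempotentElem f) :
    rIdeal e ⊆ rIdeal f ↔ f * e = e := by
  rw [_root_.rIdeal_subset_rIdeal_iff, hf.mem_rIdeal_iff]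

theorem rIdeal_inter_rIdeal_eq_zero {x z : R}
    (h : ∀ y ∈ rIdeal x, y ∈ rIdeal z → y = 0) : rIdeal x ∩ rIdeal z = {0} :=
  Set.eq_singleton_iff_unique_mem.mpr
    ⟨⟨zero_mem_rIdeal x, zero_mem_rIdeal z⟩, fun y hy => h y hy.1 hy.2⟩

theorem IsIdempotentElem.rIdeal_inter_eq_zero_of_mul_eq_zero {e a : R}
    (he : IsIdempotentElem e) (hea : e * a = 0) : rIdeal a ∩ rIdeal e = {0} := by
  refine rIdeal_inter_rIdeal_eq_zero fun y ⟨s, hy⟩ hye => ?_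
  rw [← he.mem_rIdeal_iff.mp hye, hy, ← mul_assoc, hea, zero_mul]

theorem rIdeal_mul_inter_rIdeal_mul_sub_eq_zero {u b c : R} (hub : u * b = b)
    (huc : u * c = 0) : rIdeal (c * b) ∩ rIdeal (c * b - b) = {0} := by
  refine rIdeal_inter_rIdeal_eq_zero fun y ⟨s, hys⟩ ⟨t, hyt⟩ => ?_
  have hbt : b * t = 0 := by
    have h := congrArg (u * ·) (hys.symm.trans hyt)
    simp only [← mul_assoc, mul_sub, huc, hub, zero_mul, zero_sub, neg_mul] at h
    exact neg_eq_zero.mp h.symm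
  rw [hyt, sub_mul, mul_assoc, hbt, mul_zero, sub_zero]

theorem subperspIdeal_rIdeal {a w u : R} (haw : a - w ∈ rIdeal u)
    (hint : rIdeal a ∩ rIdeal w = {0}) : SubperspIdeal (rIdeal a) (rIdeal u) := by
  refine ⟨rIdeal w, ⟨w, rfl⟩, hint, ?_⟩
  rintro _ ⟨_, ⟨s, rfl⟩, _, ⟨t, rfl⟩, rfl⟩
  exact ⟨(a - w) * s, mul_mem_rIdeal haw s, w * (s + t), ⟨s + t, rfl⟩, by noncomm_ring⟩

theorem idealSum_rIdeal_rIdeal_one_sub (e : R) :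
    idealSum (rIdeal e) (rIdeal (1 - e)) = Set.univ :=
  Set.eq_univ_of_forall fun y =>
    ⟨e * y, ⟨y, rfl⟩, (1 - e) * y, ⟨y, rfl⟩, by noncomm_ring⟩

theorem isCentralIdeal_rIdeal {e : R} (hec : e ∈ Set.center R) (he : IsIdempotentElem e) :
    IsCentralIdeal (rIdeal e) := by
  have hcomm := Semigroup.mem_center_iff.mp hec
  refine ⟨⟨rIdeal (1 - e), ⟨1 - e, rfl⟩, idealSum_rIdeal_rIdeal_one_sub e, ?_⟩, ?_⟩
  · exact he.one_sub.rIdeal_inter_eq_zero_of_mul_eq_zero he.one_sub_mul_self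
  rintro _ ⟨x, rfl⟩ ⟨_, ⟨z, rfl⟩, hxz, hsum⟩ hxe
  refine Set.eq_singleton_iff_unique_mem.mpr ⟨zero_mem_rIdeal x, fun y hy => ?_⟩
  obtain ⟨_, ⟨p, rfl⟩, _, ⟨q, rfl⟩, hyeq⟩ :=
    hsum ⟨y, hy, 0, zero_mem_rIdeal z, (add_zero y).symm⟩
  have hxmem : y - e * y ∈ rIdeal x := by
    obtain ⟨s, rfl⟩ := hy
    exact ⟨s - e * s, by rw [mul_sub, ← mul_assoc, ← mul_assoc, hcomm x]⟩
  have hzmem : y - e * y ∈ rIdeal z :=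
    ⟨q - e * q, by rw [hyeq, mul_add, ← mul_assoc, he.eq, ← mul_assoc, ← hcomm z]; noncomm_ring⟩
  have hy_eq : e * y = y := (sub_eq_zero.mp (hxz.subset ⟨hxmem, hzmem⟩)).symm
  exact hxe.subset ⟨hy, he.mem_rIdeal_iff.mpr hy_eq⟩

theorem IsCentralIdeal.mul_eq_zero {u b c : R} (hu : IsIdempotentElem u)
    (hU : IsCentralIdeal (rIdeal u)) (hub : u * b = b) (huc : u * c = 0) : c * b = 0 := by
  have hcb : rIdeal (c * b) = {0} := by
    refine hU.2 _ ⟨c * b, rfl⟩ (subperspIdeal_rIdeal (w := c * b - b) ?_ ?_) ?_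
    · rw [sub_sub_cancel]
      exact hu.mem_rIdeal_iff.mpr hub
    · exact rIdeal_mul_inter_rIdeal_mul_sub_eq_zero hub huc
    · exact hu.rIdeal_inter_eq_zero_of_mul_eq_zero (by rw [← mul_assoc, huc, zero_mul])
  exact hcb.subset (self_mem_rIdeal _)

theorem IsCentralIdeal.eq_zero_of_mul_one_sub_eq (hreg : ∀ x : R, ∃ y : R, x * y * x = x)
    {u b : R} (hu : IsIdempotentElem u) (hU : IsCentralIdeal (rIdeal u)) (hub : u * b = b)
    (hbu : b * (1 - u) = b) : b = 0 := by
  obtain ⟨y, hy⟩ := hreg b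
  have hcb : (1 - u) * y * b = 0 :=
    hU.mul_eq_zero hu hub (by rw [← mul_assoc, hu.mul_one_sub_self, zero_mul])
  calc b = b * y * b := hy.symm
    _ = b * ((1 - u) * y * b) := by rw [← mul_assoc, ← mul_assoc, hbu]
    _ = 0 := by rw [hcb, mul_zero]

theorem IsCentralIdeal.mem_center (hreg : ∀ x : R, ∃ y : R, x * y * x = x) {u : R}
    (hu : IsIdempotentElem u) (hU : IsCentralIdeal (rIdeal u)) : u ∈ Set.center R := by
  refine Semigroup.mem_center_iff.mpr fun r => ?_
  have hright : (1 - u) * r * u = 0 :=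
    hU.mul_eq_zero hu hu.eq (by rw [← mul_assoc, hu.mul_one_sub_self, zero_mul])
  have hleft : u * r * (1 - u) = 0 :=
    hU.eq_zero_of_mul_one_sub_eq hreg hu (by rw [← mul_assoc, ← mul_assoc, hu.eq])
      (by rw [mul_assoc, hu.one_sub.eq])
  calc r * u = u * r * u := by rw [← sub_eq_zero, ← hright]; noncomm_ring
    _ = u * r := by rw [eq_comm, ← sub_eq_zero, ← hleft]; noncomm_ring

theorem exists_isIdempotentElem_rIdeal_eq (hreg : ∀ x : R, ∃ y : R, x * y * x = x) (x : R) :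
    ∃ e : R, IsIdempotentElem e ∧ rIdeal e = rIdeal x := by
  obtain ⟨y, hy⟩ := hreg x
  refine ⟨x * y, by rw [IsIdempotentElem, ← mul_assoc, hy], ?_⟩
  refine subset_antisymm ?_ ?_ <;> rw [rIdeal_subset_rIdeal_iff]
  · exact ⟨y, rfl⟩
  · exact ⟨x, hy.symm⟩

theorem mul_eq_left_iff_rIdeal_subset {e f : R} (he : e ∈ Set.center R)
    (hf : IsIdempotentElem f) : e * f = e ↔ rIdeal e ⊆ rIdeal f := by
  rw [hf.rIdeal_subset_rIdeal_iff, Semigroup.mem_center_iff.mp he f]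

theorem eq_of_rIdeal_eq {e f : R} (he : e ∈ Set.center R) (hee : IsIdempotentElem e)
    (hf : IsIdempotentElem f) (h : rIdeal e = rIdeal f) : e = f :=
  calc e = e * f := ((mul_eq_left_iff_rIdeal_subset he hf).mpr h.subset).symm
    _ = f := hee.rIdeal_subset_rIdeal_iff.mp h.symm.subset

end

/-- For a unital von Neumann regular ring `R`, the map
`e ↦ eR` is an order isomorphism from the Boolean algebra of central
idempotents of `R` (ordered by `e ≤ f ⇔ ef = e`) onto the center of the
lattice `L(R)`. -/
theorem stmt17 {R : Type*} [Ring R]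
    (hreg : ∀ x : R, ∃ y : R, x * y * x = x) :
    ∃ φ : {e : R // e ∈ Set.center R ∧ e * e = e} ≃
        {I : Set R // IsPrincRight I ∧ IsCentralIdeal I},
      (∀ e, (φ e : Set R) = rIdeal e.1) ∧
      (∀ e f : {e : R // e ∈ Set.center R ∧ e * e = e},
        e.1 * f.1 = e.1 ↔ (φ e : Set R) ⊆ (φ f : Set R)) := by
  let φ : {e : R // e ∈ Set.center R ∧ e * e = e} →
      {I : Set R // IsPrincRight I ∧ IsCentralIdeal I} :=
    fun e => ⟨rIdeal e.1, ⟨e.1, rfl⟩, isCentralIdeal_rIdeal e.2.1 e.2.2⟩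
  have hinj : Function.Injective φ := fun e f h =>
    Subtype.ext (eq_of_rIdeal_eq e.2.1 e.2.2 f.2.2 (congrArg Subtype.val h))
  have hsurj : Function.Surjective φ := by
    rintro ⟨I, ⟨x, rfl⟩, hI⟩
    obtain ⟨u, hu, hux⟩ := exists_isIdempotentElem_rIdeal_eq hreg x
    exact ⟨⟨u, (hux ▸ hI).mem_center hreg hu, hu⟩, Subtype.ext hux⟩
  exact ⟨Equiv.ofBijective φ ⟨hinj, hsurj⟩, fun _ => rfl,
    fun e f => mul_eq_left_iff_rIdeal_subset e.2.1 f.2.2⟩
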